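/- The square root of the Jensen–Shannon divergence between the unprotected posterior mixture and the prior is bounded by the Bayesian privacy leakage plus a total-variation term: √JS(f^O ‖ f_B) ≤ √JS(f^A ‖ f_B) + (1/2)·(e^{2ξ} − 1)·TV(P^O ‖ P^S). -/

import Mathlib

open MeasureTheory

/-- Jensen–Shannon divergence between two probability densities `p, q` on `(𝒟, μ)`:
`JS(p ‖ q) = (1/2)∫ p·log(p/m) dμ + (1/2)∫ q·log(q/m) dμ` with `m = (p+q)/2`. -/
noncomputable def JSdiv {α : Type*} [MeasurableSpace α] (μ : Measure α) (p q : α → ℝ) : ℝ :=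
  (1 / 2) * ∫ d, p d * Real.log (p d / ((p d + q d) / 2)) ∂μ
    + (1 / 2) * ∫ d, q d * Real.log (q d / ((p d + q d) / 2)) ∂μ

/-- Total variation distance between two measures:
`TV(P ‖ Q) = sup_{A measurable} |P(A) − Q(A)|`. -/
noncomputable def TV {α : Type*} [MeasurableSpace α] (P Q : Measure α) : ℝ :=
  ⨆ A : { A : Set α // MeasurableSet A }, |(P A).toReal - (Q A).toReal|

lemma my_amgm {x y c : ℝ} (hc : 0 < c) : x * y ≤ (c * x ^ 2 + y ^ 2 / c) / 2 := by
  rw [le_div_iff₀ (by norm_num : (0:ℝ) < 2), ← sub_nonneg]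
  have h : c * x ^ 2 + y ^ 2 / c - x * y * 2 = (c * x - y) ^ 2 / c := by
    field_simp; ring
  rw [h]; positivity

/-- Cauchy–Schwarz for nonnegative functions. -/
lemma my_cs {α : Type*} [MeasurableSpace α] (μ : Measure α) (u v : α → ℝ)
    (hu : ∀ a, 0 ≤ u a) (hv : ∀ a, 0 ≤ v a)
    (huv : AEStronglyMeasurable (fun a => u a * v a) μ)
    (hu2 : Integrable (fun a => u a ^ 2) μ) (hv2 : Integrable (fun a => v a ^ 2) μ) :
    ∫ a, u a * v a ∂μ ≤ Real.sqrt (∫ a, u a ^ 2 ∂μ) * Real.sqrt (∫ a, v a ^ 2 ∂μ) := by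
  set A := ∫ a, u a ^ 2 ∂μ with hA
  set B := ∫ a, v a ^ 2 ∂μ with hB
  have hA0 : 0 ≤ A := integral_nonneg (fun a => sq_nonneg _)
  have hB0 : 0 ≤ B := integral_nonneg (fun a => sq_nonneg _)
  have huvint : Integrable (fun a => u a * v a) μ := by
    refine Integrable.mono' ((hu2.add hv2).div_const 2) huv ?_
    refine Filter.Eventually.of_forall fun a => ?_
    simp only [Pi.add_apply]
    rw [Real.norm_eq_abs, abs_of_nonneg (mul_nonneg (hu a) (hv a))]
    nlinarith [sq_nonneg (u a - v a)]
  rcases eq_or_lt_of_le hA0 with hAz | hAp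
  · have hz : (fun a => u a ^ 2) =ᵐ[μ] 0 :=
      (integral_eq_zero_iff_of_nonneg (fun a => sq_nonneg _) hu2).mp hAz.symm
    have huz : (fun a => u a * v a) =ᵐ[μ] 0 := by
      filter_upwards [hz] with a ha
      have : u a = 0 := by simpa [pow_eq_zero_iff] using ha
      simp [this]
    rw [integral_congr_ae huz]
    have h0 : (0:ℝ) ≤ Real.sqrt A * Real.sqrt B := by positivity
    simpa using h0
  rcases eq_or_lt_of_le hB0 with hBz | hBp
  · have hz : (fun a => v a ^ 2) =ᵐ[μ] 0 :=
      (integral_eq_zero_iff_of_nonneg (fun a => sq_nonneg _) hv2).mp hBz.symm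
    have hvz : (fun a => u a * v a) =ᵐ[μ] 0 := by
      filter_upwards [hz] with a ha
      have : v a = 0 := by simpa [pow_eq_zero_iff] using ha
      simp [this]
    rw [integral_congr_ae hvz]
    have h0 : (0:ℝ) ≤ Real.sqrt A * Real.sqrt B := by positivity
    simpa using h0
  · set c := Real.sqrt B / Real.sqrt A with hc
    have hsA : 0 < Real.sqrt A := Real.sqrt_pos.mpr hAp
    have hsB : 0 < Real.sqrt B := Real.sqrt_pos.mpr hBp
    have hcpos : 0 < c := div_pos hsB hsA
    have key : ∀ a, u a * v a ≤ (c * u a ^ 2 + v a ^ 2 / c) / 2 :=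
      fun a => my_amgm hcpos
    have hint : Integrable (fun a => (c * u a ^ 2 + v a ^ 2 / c) / 2) μ := by
      have h1 : Integrable (fun a => c * u a ^ 2) μ := hu2.const_mul c
      have h2 : Integrable (fun a => v a ^ 2 / c) μ := hv2.div_const c
      exact (h1.add h2).div_const 2
    have hmono := integral_mono huvint (by
      have h1 : Integrable (fun a => c * u a ^ 2) μ := hu2.const_mul c
      have h2 : Integrable (fun a => v a ^ 2 / c) μ := hv2.div_const c
      exact (h1.add h2).div_const 2) key
    have hrhs : ∫ a, (c * u a ^ 2 + v a ^ 2 / c) / 2 ∂μ = (c * A + B / c) / 2 := by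
      have e1 : ∫ a, (c * u a ^ 2 + v a ^ 2 / c) ∂μ = c * A + B / c := by
        rw [integral_add (hu2.const_mul c) (hv2.div_const c)]
        rw [integral_const_mul, integral_div]
      rw [← e1, ← integral_div]
    rw [hrhs] at hmono
    have hval : (c * A + B / c) / 2 = Real.sqrt A * Real.sqrt B := by
      have hA' : Real.sqrt A ^ 2 = A := Real.sq_sqrt hA0
      have hB' : Real.sqrt B ^ 2 = B := Real.sq_sqrt hB0
      rw [hc, ← hA', ← hB']
      field_simp
      simp only [Real.sqrt_sq hsA.le, Real.sqrt_sq hsB.le]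
      ring
    linarith

/-- L² Minkowski-type bound from a pointwise bound `u ≤ v + w`. -/
lemma my_minkowski {α : Type*} [MeasurableSpace α] (μ : Measure α) (u v w : α → ℝ)
    (hu : ∀ a, 0 ≤ u a) (hv : ∀ a, 0 ≤ v a) (hw : ∀ a, 0 ≤ w a)
    (hvw : AEStronglyMeasurable (fun a => v a * w a) μ)
    (hu2 : Integrable (fun a => u a ^ 2) μ) (hv2 : Integrable (fun a => v a ^ 2) μ)
    (hw2 : Integrable (fun a => w a ^ 2) μ)
    (hle : ∀ a, u a ≤ v a + w a) :
    Real.sqrt (∫ a, u a ^ 2 ∂μ) ≤ Real.sqrt (∫ a, v a ^ 2 ∂μ) + Real.sqrt (∫ a, w a ^ 2 ∂μ) := by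
  have hvwint : Integrable (fun a => v a * w a) μ := by
    refine Integrable.mono' ((hv2.add hw2).div_const 2) hvw ?_
    refine Filter.Eventually.of_forall fun a => ?_
    simp only [Pi.add_apply]
    rw [Real.norm_eq_abs, abs_of_nonneg (mul_nonneg (hv a) (hw a))]
    nlinarith [sq_nonneg (v a - w a)]
  have hvw2 : Integrable (fun a => 2 * (v a * w a)) μ := hvwint.const_mul 2
  have hfint : Integrable (fun a => v a ^ 2 + 2 * (v a * w a)) μ := by
    have := hv2.add hvw2
    exact this
  have hsum2 : Integrable (fun a => (v a + w a) ^ 2) μ := by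
    have heq : (fun a => (v a + w a) ^ 2)
        = fun a => (v a ^ 2 + 2 * (v a * w a)) + w a ^ 2 := by
      funext a; ring
    rw [heq]
    have := hfint.add hw2
    exact this
  have h1 : ∫ a, u a ^ 2 ∂μ ≤ ∫ a, (v a + w a) ^ 2 ∂μ := by
    refine integral_mono hu2 hsum2 fun a => ?_
    have := hle a
    nlinarith [hu a, hv a, hw a]
  have h2 : ∫ a, (v a + w a) ^ 2 ∂μ
      = ∫ a, v a ^ 2 ∂μ + 2 * ∫ a, v a * w a ∂μ + ∫ a, w a ^ 2 ∂μ := by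
    have heq : (fun a => (v a + w a) ^ 2)
        = fun a => (v a ^ 2 + 2 * (v a * w a)) + w a ^ 2 := by
      funext a; ring
    rw [heq, integral_add hfint hw2, integral_add hv2 hvw2, integral_const_mul]
  have hcs := my_cs μ v w hv hw hvw hv2 hw2
  have hv0 : 0 ≤ ∫ a, v a ^ 2 ∂μ := integral_nonneg fun a => sq_nonneg _
  have hw0 : 0 ≤ ∫ a, w a ^ 2 ∂μ := integral_nonneg fun a => sq_nonneg _
  have e1 : Real.sqrt (∫ a, v a ^ 2 ∂μ) ^ 2 = ∫ a, v a ^ 2 ∂μ := Real.sq_sqrt hv0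
  have e2 : Real.sqrt (∫ a, w a ^ 2 ∂μ) ^ 2 = ∫ a, w a ^ 2 ∂μ := Real.sq_sqrt hw0
  have h3 : ∫ a, u a ^ 2 ∂μ
      ≤ (Real.sqrt (∫ a, v a ^ 2 ∂μ) + Real.sqrt (∫ a, w a ^ 2 ∂μ)) ^ 2 := by
    nlinarith [h1, h2, hcs]
  calc Real.sqrt (∫ a, u a ^ 2 ∂μ)
      ≤ Real.sqrt ((Real.sqrt (∫ a, v a ^ 2 ∂μ) + Real.sqrt (∫ a, w a ^ 2 ∂μ)) ^ 2) :=
        Real.sqrt_le_sqrt h3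
    _ = Real.sqrt (∫ a, v a ^ 2 ∂μ) + Real.sqrt (∫ a, w a ^ 2 ∂μ) := by
        rw [Real.sqrt_sq (by positivity)]

/-- Pointwise JS function: `ψ t = (1/2)(t log(2t/(t+1)) + log(2/(t+1)))`. -/
noncomputable def psiJS (t : ℝ) : ℝ :=
  (1/2) * (t * Real.log (2*t/(t+1)) + Real.log (2/(t+1)))

lemma psiJS_one : psiJS 1 = 0 := by
  norm_num [psiJS]

lemma psiJS_eq {x : ℝ} (hx : 0 < x) :
    psiJS x = (1/2) * (x * (Real.log 2 + Real.log x - Real.log (x+1))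
      + (Real.log 2 - Real.log (x+1))) := by
  have h1 : Real.log (2*x/(x+1)) = Real.log 2 + Real.log x - Real.log (x+1) := by
    rw [Real.log_div (by positivity) (by positivity), Real.log_mul (by norm_num) hx.ne']
  have h2 : Real.log (2/(x+1)) = Real.log 2 - Real.log (x+1) :=
    Real.log_div (by norm_num) (by positivity)
  rw [psiJS, h1, h2]

lemma hasDerivAt_psiJS {t : ℝ} (ht : 0 < t) :
    HasDerivAt psiJS ((1/2) * Real.log (2*t/(t+1))) t := by
  have ht1 : (0:ℝ) < t + 1 := by positivity
  have hlog : HasDerivAt Real.log t⁻¹ t := Real.hasDerivAt_log ht.ne'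
  have hlog1 : HasDerivAt (fun x : ℝ => Real.log (x+1)) (t+1)⁻¹ t := by
    have h := Real.hasDerivAt_log ht1.ne'
    have hid : HasDerivAt (fun x : ℝ => x + 1) 1 t := (hasDerivAt_id t).add_const 1
    have h' := h.comp t hid
    rw [mul_one] at h'
    exact h'
  have h1 : HasDerivAt (fun x : ℝ => Real.log 2 + Real.log x - Real.log (x+1))
      (t⁻¹ - (t+1)⁻¹) t := by
    have h' := ((hasDerivAt_const t (Real.log 2)).add hlog).sub hlog1
    rw [zero_add] at h'
    exact h'
  have h2 : HasDerivAt (fun x : ℝ => x * (Real.log 2 + Real.log x - Real.log (x+1)))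
      (1 * (Real.log 2 + Real.log t - Real.log (t+1)) + t * (t⁻¹ - (t+1)⁻¹)) t :=
    (hasDerivAt_id t).mul h1
  have h3 : HasDerivAt (fun x : ℝ => Real.log 2 - Real.log (x+1)) (0 - (t+1)⁻¹) t :=
    (hasDerivAt_const t (Real.log 2)).sub hlog1
  have h4 := ((h2.add h3).const_mul ((1:ℝ)/2))
  have heq : psiJS =ᶠ[nhds t] fun x =>
      (1/2) * ((x * (Real.log 2 + Real.log x - Real.log (x+1)))
        + (Real.log 2 - Real.log (x+1))) := by
    filter_upwards [eventually_gt_nhds ht] with x hx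
    exact psiJS_eq hx
  refine HasDerivAt.congr_of_eventuallyEq ?_ heq
  refine h4.congr_deriv ?_
  have hl : Real.log (2*t/(t+1)) = Real.log 2 + Real.log t - Real.log (t+1) := by
    rw [Real.log_div (by positivity) ht1.ne', Real.log_mul (by norm_num) ht.ne']
  rw [hl]
  field_simp
  ring

lemma continuousOn_psiJS {s : Set ℝ} (hs : ∀ x ∈ s, 0 < x) : ContinuousOn psiJS s :=
  fun x hx => ((hasDerivAt_psiJS (hs x hx)).continuousAt).continuousWithinAt

lemma psiJS_lb_left {t : ℝ} (h0 : 0 < t) (h1 : t ≤ 1) : (1-t)^2/8 ≤ psiJS t := by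
  have hF : AntitoneOn (fun x => psiJS x - (1-x)^2/8) (Set.Icc t 1) := by
    apply antitoneOn_of_deriv_nonpos (convex_Icc t 1)
    · apply ContinuousOn.sub (continuousOn_psiJS ?_)
      · exact (continuousOn_const.sub (continuousOn_id)).pow 2 |>.div_const 8
      · intro x hx; exact lt_of_lt_of_le h0 hx.1
    · intro x hx
      rw [interior_Icc] at hx
      exact ((hasDerivAt_psiJS (lt_trans h0 hx.1)).sub
        ((((hasDerivAt_const x (1:ℝ)).sub (hasDerivAt_id x)).pow 2).div_const 8)).differentiableAt.differentiableWithinAt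
    · intro x hx
      rw [interior_Icc] at hx
      have hx0 : 0 < x := lt_trans h0 hx.1
      have hq : HasDerivAt (fun y : ℝ => (1-y)^2/8) ((x-1)/4) x := by
        have h := (((hasDerivAt_const x (1:ℝ)).sub (hasDerivAt_id x)).pow 2).div_const 8
        exact h.congr_deriv (by simp; ring)
      have hd : HasDerivAt (fun x => psiJS x - (1-x)^2/8)
          ((1/2) * Real.log (2*x/(x+1)) - (x-1)/4) x :=
        (hasDerivAt_psiJS hx0).sub hq
      rw [hd.deriv]
      have hlog : Real.log (2*x/(x+1)) ≤ 2*x/(x+1) - 1 :=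
        Real.log_le_sub_one_of_pos (by positivity)
      have hx1 : x < 1 := hx.2
      have hxp1 : (0:ℝ) < x + 1 := by positivity
      have h2 : 2*x/(x+1) - 1 = (x-1)/(x+1) := by field_simp; ring
      rw [h2] at hlog
      have h3 : (x-1)/(x+1) ≤ (x-1)/2 := by
        rw [div_le_div_iff₀ hxp1 (by norm_num)]
        nlinarith
      nlinarith
  have := hF (Set.left_mem_Icc.mpr h1) (Set.right_mem_Icc.mpr h1) h1
  simp only [psiJS_one] at this
  norm_num at this
  linarith

lemma psiJS_lb_right {t : ℝ} (h1 : 1 ≤ t) : (t-1)^2/(4*(t^2+t)) ≤ psiJS t := by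
  rcases eq_or_lt_of_le h1 with rfl | h1'
  · simp [psiJS_one]
  have hG : MonotoneOn (fun x => psiJS x - (x-1)^2/(4*(x^2+x))) (Set.Icc 1 t) := by
    apply monotoneOn_of_deriv_nonneg (convex_Icc 1 t)
    · apply ContinuousOn.sub (continuousOn_psiJS ?_)
      · apply ContinuousOn.div
        · exact (continuousOn_id.sub continuousOn_const).pow 2
        · exact continuousOn_const.mul ((continuousOn_id.pow 2).add continuousOn_id)
        · intro x hx
          have : (1:ℝ) ≤ x := hx.1
          positivity
      · intro x hx; linarith [hx.1]
    · intro x hx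
      rw [interior_Icc] at hx
      have hx1 : (1:ℝ) < x := hx.1
      have hden : (4*(x^2+x)) ≠ 0 := by positivity
      exact ((hasDerivAt_psiJS (by linarith)).sub
        ((((hasDerivAt_id x).sub_const 1).pow 2).div
          (((((hasDerivAt_id x).pow 2)).add (hasDerivAt_id x)).const_mul 4) hden)).differentiableAt.differentiableWithinAt
    · intro x hx
      rw [interior_Icc] at hx
      have hx1 : (1:ℝ) < x := hx.1
      have hx0 : (0:ℝ) < x := by linarith
      have hden : (4*(x^2+x)) ≠ 0 := by positivity
      have hnum : HasDerivAt (fun x : ℝ => (x-1)^2) (2 * (x-1)) x := by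
        have h := ((hasDerivAt_id x).sub_const 1).pow 2
        exact h.congr_deriv (by simp)
      have hde : HasDerivAt (fun x : ℝ => 4*(x^2+x)) (4 * (2*x + 1)) x := by
        have h := ((((hasDerivAt_id x).pow 2)).add (hasDerivAt_id x)).const_mul (4:ℝ)
        exact h.congr_deriv (by simp)
      have hd : HasDerivAt (fun x => psiJS x - (x-1)^2/(4*(x^2+x)))
          ((1/2) * Real.log (2*x/(x+1))
            - ((2 * (x-1)) * (4*(x^2+x)) - (x-1)^2 * (4 * (2*x + 1)))
              / (4*(x^2+x))^2) x :=
        (hasDerivAt_psiJS hx0).sub (hnum.div hde hden)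
      rw [hd.deriv]
      have hlog : (x-1)/(2*x) ≤ Real.log (2*x/(x+1)) := by
        have h := Real.log_le_sub_one_of_pos (show (0:ℝ) < (x+1)/(2*x) by positivity)
        have hinv : Real.log ((x+1)/(2*x)) = - Real.log (2*x/(x+1)) := by
          rw [← Real.log_inv]
          congr 1
          field_simp
        rw [hinv] at h
        have h2 : (x+1)/(2*x) - 1 = (1-x)/(2*x) := by field_simp; ring
        rw [h2] at h
        have : -Real.log (2*x/(x+1)) ≤ (1-x)/(2*x) := h
        have e : (x-1)/(2*x) = -((1-x)/(2*x)) := by ring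
        rw [e]
        linarith
      rw [sub_nonneg]
      calc ((2 * (x-1)) * (4*(x^2+x)) - (x-1)^2 * (4 * (2*x + 1))) / (4*(x^2+x))^2
          ≤ (x-1)/(4*x) := by
            rw [div_le_div_iff₀ (by positivity) (by positivity)]
            have key : (x-1)*(4*(x^2+x))^2
                - (2*(x-1)*(4*(x^2+x)) - (x-1)^2*(4*(2*x+1)))*(4*x)
                = 16*x*(x-1)^2*(x^2+3*x+1) := by ring
            have pos : (0:ℝ) ≤ 16*x*(x-1)^2*(x^2+3*x+1) := by
              have h1 : (0:ℝ) ≤ 16*x := by linarith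
              have h2 : (0:ℝ) ≤ x^2+3*x+1 := by nlinarith
              have := mul_nonneg (mul_nonneg h1 (sq_nonneg (x-1))) h2
              linarith
            linarith
        _ ≤ (1/2) * Real.log (2*x/(x+1)) := by
            have : (x-1)/(4*x) = (1/2) * ((x-1)/(2*x)) := by ring
            rw [this]
            linarith [hlog]
  have := hG (Set.left_mem_Icc.mpr h1) (Set.right_mem_Icc.mpr h1) h1
  simp only [psiJS_one] at this
  norm_num at this
  linarith

lemma psiJS_nonneg {t : ℝ} (ht : 0 < t) : 0 ≤ psiJS t := by
  rcases le_or_gt t 1 with h | h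
  · have := psiJS_lb_left ht h
    nlinarith [sq_nonneg (1-t)]
  · have := psiJS_lb_right h.le
    refine le_trans ?_ this
    positivity

lemma psiJS_pos {x : ℝ} (hx : 0 < x) (hne : x ≠ 1) : 0 < psiJS x := by
  rcases lt_or_gt_of_ne hne with h | h
  · have := psiJS_lb_left hx h.le
    have h2 : (0:ℝ) < (1-x)^2/8 := by
      have h4 : (0:ℝ) < (1-x)^2 := pow_pos (by linarith) 2
      positivity
    linarith
  · have := psiJS_lb_right h.le
    have h2 : (0:ℝ) < (x-1)^2/(4*(x^2+x)) := by
      have h3 : (0:ℝ) < (x-1)^2 := by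
        have : x - 1 ≠ 0 := sub_ne_zero.mpr hne
        positivity
      positivity
    linarith

/-- The key derivative bound: `ψ'(x)² ≤ e^{2ξ} ψ(x)` on `[e^{−ξ}, e^{ξ}]`. -/
lemma abs_dpsiJS_le {ξ x : ℝ} (hξ : 0 ≤ ξ) (hx1 : Real.exp (-ξ) ≤ x) (hx2 : x ≤ Real.exp ξ) :
    |(1/2) * Real.log (2*x/(x+1))| ≤ Real.exp ξ * Real.sqrt (psiJS x) := by
  set E := Real.exp ξ with hE
  have hE1 : 1 ≤ E := Real.one_le_exp hξ
  have hEinv : Real.exp (-ξ) = E⁻¹ := by rw [Real.exp_neg]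
  have hx0 : 0 < x := lt_of_lt_of_le (Real.exp_pos _) hx1
  have hxE : E⁻¹ ≤ x := by rw [← hEinv]; exact hx1
  have hxEmul : 1 ≤ x * E := by
    rw [← inv_mul_cancel₀ (by positivity : E ≠ 0)]
    exact mul_le_mul_of_nonneg_right hxE (by linarith)
  have hsq : ((1/2) * Real.log (2*x/(x+1)))^2 ≤ E^2 * psiJS x := by
    rcases le_total x 1 with hle | hge
    · -- x ≤ 1
      have hlow : -((1-x)/(2*x)) ≤ Real.log (2*x/(x+1)) := by
        have h := Real.log_le_sub_one_of_pos (show (0:ℝ) < (x+1)/(2*x) by positivity)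
        have hinv : Real.log ((x+1)/(2*x)) = - Real.log (2*x/(x+1)) := by
          rw [← Real.log_inv]; congr 1; field_simp
        rw [hinv] at h
        have h2 : (x+1)/(2*x) - 1 = (1-x)/(2*x) := by field_simp; ring
        rw [h2] at h
        linarith
    -- upper bound : log ≤ 0 ≤ (1-x)/(2x)
      have hup : Real.log (2*x/(x+1)) ≤ (1-x)/(2*x) := by
        have hy : 2*x/(x+1) ≤ 1 := by
          rw [div_le_one (by positivity)]; linarith
        have := Real.log_nonpos (by positivity) hy
        have hnn : (0:ℝ) ≤ (1-x)/(2*x) := by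
          apply div_nonneg; linarith; positivity
        linarith
      have habs : (Real.log (2*x/(x+1)))^2 ≤ ((1-x)/(2*x))^2 :=
        sq_le_sq' hlow hup
      have hpsi := psiJS_lb_left hx0 hle
      -- (1/4)·((1-x)/(2x))² ≤ E²·(1-x)²/8  ⟸  2 ≤ 4x²E² (since xE ≥ 1)
      have hkey : (1/4) * ((1-x)/(2*x))^2 ≤ E^2 * ((1-x)^2/8) := by
        rw [div_pow]
        have e1 : (1/4) * ((1-x)^2/(2*x)^2) = (1-x)^2/(16*x^2) := by ring
        rw [e1, div_le_iff₀ (by positivity)]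
        have hx2E : 1 ≤ x^2 * E^2 := by nlinarith [hxEmul, hx0]
        nlinarith [sq_nonneg (1-x), hx2E]
      calc ((1/2) * Real.log (2*x/(x+1)))^2
          = (1/4) * (Real.log (2*x/(x+1)))^2 := by ring
        _ ≤ (1/4) * ((1-x)/(2*x))^2 := by linarith
        _ ≤ E^2 * ((1-x)^2/8) := hkey
        _ ≤ E^2 * psiJS x := mul_le_mul_of_nonneg_left hpsi (sq_nonneg E)
    · -- 1 ≤ x
      have hup : Real.log (2*x/(x+1)) ≤ (x-1)/(x+1) := by
        have h := Real.log_le_sub_one_of_pos (show (0:ℝ) < 2*x/(x+1) by positivity)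
        have h2 : 2*x/(x+1) - 1 = (x-1)/(x+1) := by field_simp; ring
        linarith [h, h2.le, h2.ge]
      have hlow : -((x-1)/(x+1)) ≤ Real.log (2*x/(x+1)) := by
        have hy : 1 ≤ 2*x/(x+1) := by
          rw [le_div_iff₀ (by positivity)]; linarith
        have := Real.log_nonneg hy
        have hnn : (0:ℝ) ≤ (x-1)/(x+1) := by
          apply div_nonneg; linarith; positivity
        linarith
      have habs : (Real.log (2*x/(x+1)))^2 ≤ ((x-1)/(x+1))^2 :=
        sq_le_sq' hlow hup
      have hpsi := psiJS_lb_right hge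
      have hkey : (1/4) * ((x-1)/(x+1))^2 ≤ E^2 * ((x-1)^2/(4*(x^2+x))) := by
        have hxp : (x+1) ≠ 0 := by positivity
        have e1 : (1:ℝ)/4 * ((x-1)/(x+1))^2 = (x-1)^2/(4*(x+1)^2) := by
          field_simp
        have e2 : E^2 * ((x-1)^2/(4*(x^2+x))) = (E^2*(x-1)^2)/(4*(x^2+x)) := by
          ring
        rw [e1, e2, div_le_div_iff₀ (by positivity) (by positivity)]
        have hxE2 : x ≤ E^2 := le_trans hx2 (by nlinarith)
        have hstep : x^2 + x ≤ E^2*(x+1)^2 := by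
          have h5 := mul_le_mul_of_nonneg_right hxE2 (sq_nonneg (x+1))
          nlinarith [mul_pos hx0 hx0, hx0]
        nlinarith [mul_le_mul_of_nonneg_left hstep (sq_nonneg (x-1))]
      calc ((1/2) * Real.log (2*x/(x+1)))^2
          = (1/4) * (Real.log (2*x/(x+1)))^2 := by ring
        _ ≤ (1/4) * ((x-1)/(x+1))^2 := by linarith
        _ ≤ E^2 * ((x-1)^2/(4*(x^2+x))) := hkey
        _ ≤ E^2 * psiJS x := mul_le_mul_of_nonneg_left hpsi (sq_nonneg E)
  have h1 : |(1/2) * Real.log (2*x/(x+1))|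
      = Real.sqrt (((1/2) * Real.log (2*x/(x+1)))^2) := (Real.sqrt_sq_eq_abs _).symm
  rw [h1]
  calc Real.sqrt (((1/2) * Real.log (2*x/(x+1)))^2)
      ≤ Real.sqrt (E^2 * psiJS x) := Real.sqrt_le_sqrt hsq
    _ = E * Real.sqrt (psiJS x) := by
        rw [Real.sqrt_mul (sq_nonneg E), Real.sqrt_sq (by positivity)]

lemma sqrtPsi_mono_aux {ξ : ℝ} (hξ : 0 ≤ ξ) {s a b : ℝ} (hs : s = 1 ∨ s = -1)
    (ha : Real.exp (-ξ) ≤ a) (hb : b ≤ Real.exp ξ) (h1 : ∀ x ∈ Set.Ioo a b, x ≠ 1) :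
    MonotoneOn (fun x => (Real.exp ξ / 2) * x + s * Real.sqrt (psiJS x)) (Set.Icc a b) := by
  have hapos : 0 < a := lt_of_lt_of_le (Real.exp_pos _) ha
  apply monotoneOn_of_deriv_nonneg (convex_Icc a b)
  · exact (continuousOn_const.mul continuousOn_id).add (continuousOn_const.mul
      (Real.continuous_sqrt.comp_continuousOn
        (continuousOn_psiJS (fun x hx => lt_of_lt_of_le hapos hx.1))))
  · intro x hx
    rw [interior_Icc] at hx
    have hx0 : 0 < x := lt_trans hapos hx.1
    have hpsipos : 0 < psiJS x := psiJS_pos hx0 (h1 x hx)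
    have hsq : HasDerivAt (fun y => Real.sqrt (psiJS y))
        (1/(2 * Real.sqrt (psiJS x)) * ((1/2) * Real.log (2*x/(x+1)))) x :=
      (Real.hasDerivAt_sqrt hpsipos.ne').comp x (hasDerivAt_psiJS hx0)
    exact (((hasDerivAt_id x).const_mul _).add (hsq.const_mul s)).differentiableAt.differentiableWithinAt
  · intro x hx
    rw [interior_Icc] at hx
    have hx0 : 0 < x := lt_trans hapos hx.1
    have hpsipos : 0 < psiJS x := psiJS_pos hx0 (h1 x hx)
    have hsq : HasDerivAt (fun y => Real.sqrt (psiJS y))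
        (1/(2 * Real.sqrt (psiJS x)) * ((1/2) * Real.log (2*x/(x+1)))) x :=
      (Real.hasDerivAt_sqrt hpsipos.ne').comp x (hasDerivAt_psiJS hx0)
    have hd : HasDerivAt (fun x => (Real.exp ξ / 2) * x + s * Real.sqrt (psiJS x))
        ((Real.exp ξ / 2) * 1 + s * (1/(2 * Real.sqrt (psiJS x)) * ((1/2) * Real.log (2*x/(x+1))))) x :=
      (((hasDerivAt_id x).const_mul _)).add (hsq.const_mul s)
    rw [hd.deriv]
    have hsqrtpos : 0 < Real.sqrt (psiJS x) := Real.sqrt_pos.mpr hpsipos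
    have habs := abs_dpsiJS_le hξ (le_trans ha hx.1.le) (le_trans hx.2.le hb)
    have hbound : |s * (1/(2 * Real.sqrt (psiJS x)) * ((1/2) * Real.log (2*x/(x+1))))|
        ≤ Real.exp ξ / 2 := by
      have hsabs : |s| = 1 := by rcases hs with rfl | rfl <;> norm_num
      rw [abs_mul, hsabs, one_mul, abs_mul]
      rw [abs_of_nonneg (by positivity : (0:ℝ) ≤ 1/(2 * Real.sqrt (psiJS x)))]
      rw [div_mul_eq_mul_div, one_mul, div_le_iff₀ (by positivity)]
      calc |1/2 * Real.log (2*x/(x+1))| ≤ Real.exp ξ * Real.sqrt (psiJS x) := habs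
        _ = Real.exp ξ / 2 * (2 * Real.sqrt (psiJS x)) := by ring
    have := abs_le.mp hbound
    linarith [this.1]

lemma lip_of_monos {a b L : ℝ} {h : ℝ → ℝ}
    (hm1 : MonotoneOn (fun x => L * x + (-1) * h x) (Set.Icc a b))
    (hm2 : MonotoneOn (fun x => L * x + 1 * h x) (Set.Icc a b))
    {t r : ℝ} (ht : t ∈ Set.Icc a b) (hr : r ∈ Set.Icc a b) (htr : r ≤ t) :
    |h t - h r| ≤ L * (t - r) := by
  have h1 := hm1 hr ht htr
  have h2 := hm2 hr ht htr
  simp only [neg_one_mul, one_mul] at h1 h2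
  rw [abs_le]
  constructor <;> nlinarith

lemma sqrt_psiJS_lip {ξ : ℝ} (hξ : 0 ≤ ξ) {t r : ℝ}
    (ht1 : Real.exp (-ξ) ≤ t) (ht2 : t ≤ Real.exp ξ)
    (hr1 : Real.exp (-ξ) ≤ r) (hr2 : r ≤ Real.exp ξ) :
    |Real.sqrt (psiJS t) - Real.sqrt (psiJS r)|
      ≤ (Real.exp ξ / 2) * |t - r| := by
  have hone_mem_l : Real.exp (-ξ) ≤ 1 := by
    rw [← Real.exp_zero]; exact Real.exp_le_exp.mpr (by linarith)
  have hone_mem_r : (1:ℝ) ≤ Real.exp ξ := Real.one_le_exp hξ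
  -- monotone families on the two side intervals
  have hmL1 := sqrtPsi_mono_aux (a := Real.exp (-ξ)) (b := 1) hξ (Or.inr rfl)
    (le_refl _) hone_mem_r (fun x hx => ne_of_lt hx.2)
  have hmL2 := sqrtPsi_mono_aux (a := Real.exp (-ξ)) (b := 1) hξ (Or.inl rfl)
    (le_refl _) hone_mem_r (fun x hx => ne_of_lt hx.2)
  have hmR1 := sqrtPsi_mono_aux (a := 1) (b := Real.exp ξ) hξ (Or.inr rfl)
    hone_mem_l (le_refl _) (fun x hx => ne_of_gt hx.1)
  have hmR2 := sqrtPsi_mono_aux (a := 1) (b := Real.exp ξ) hξ (Or.inl rfl)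
    hone_mem_l (le_refl _) (fun x hx => ne_of_gt hx.1)
  have key : ∀ u v : ℝ, Real.exp (-ξ) ≤ v → u ≤ Real.exp ξ → v ≤ u →
      |Real.sqrt (psiJS u) - Real.sqrt (psiJS v)| ≤ (Real.exp ξ / 2) * (u - v) := by
    intro u v hv hu hvu
    rcases le_total u 1 with hu1 | hu1
    · exact lip_of_monos hmL1 hmL2 ⟨le_trans hv hvu, hu1⟩ ⟨hv, le_trans hvu hu1⟩ hvu
    rcases le_total 1 v with hv1 | hv1
    · exact lip_of_monos hmR1 hmR2 ⟨hu1, hu⟩ ⟨hv1, le_trans hvu hu⟩ hvu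
    · -- v ≤ 1 ≤ u : split at 1
      have e1 := lip_of_monos hmR1 hmR2 ⟨hu1, hu⟩ ⟨le_refl 1, hone_mem_r⟩ hu1
      have e2 := lip_of_monos hmL1 hmL2 ⟨hone_mem_l, le_refl 1⟩ ⟨hv, hv1⟩ hv1
      calc |Real.sqrt (psiJS u) - Real.sqrt (psiJS v)|
          ≤ |Real.sqrt (psiJS u) - Real.sqrt (psiJS 1)|
            + |Real.sqrt (psiJS 1) - Real.sqrt (psiJS v)| := abs_sub_le _ _ _
        _ ≤ (Real.exp ξ / 2) * (u - 1) + (Real.exp ξ / 2) * (1 - v) := add_le_add e1 e2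
        _ = (Real.exp ξ / 2) * (u - v) := by ring
  rcases le_total r t with hrt | htr
  · have := key t r hr1 ht2 hrt
    rw [abs_of_nonneg (by linarith : (0:ℝ) ≤ t - r)]
    linarith
  · have := key r t ht1 hr2 htr
    rw [abs_sub_comm (Real.sqrt (psiJS t)), abs_sub_comm t r,
      abs_of_nonneg (by linarith : (0:ℝ) ≤ r - t)]
    linarith

lemma TV_nonneg {α : Type*} [MeasurableSpace α] (P Q : Measure α) : 0 ≤ TV P Q :=
  Real.iSup_nonneg fun A => abs_nonneg _

lemma TV_comm {α : Type*} [MeasurableSpace α] (P Q : Measure α) : TV P Q = TV Q P := by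
  unfold TV
  congr 1
  funext A
  rw [abs_sub_comm]

lemma prob_toReal_le_one {α : Type*} [MeasurableSpace α] (P : Measure α)
    [IsProbabilityMeasure P] (A : Set α) : (P A).toReal ≤ 1 := by
  simpa using ENNReal.toReal_mono ENNReal.one_ne_top prob_le_one

lemma TV_le {α : Type*} [MeasurableSpace α] (P Q : Measure α)
    [IsProbabilityMeasure P] [IsProbabilityMeasure Q] {A : Set α} (hA : MeasurableSet A) :
    |(P A).toReal - (Q A).toReal| ≤ TV P Q := by
  apply le_ciSup (f := fun A : { A : Set α // MeasurableSet A } =>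
    |(P A).toReal - (Q A).toReal|) (c := (⟨A, hA⟩ : { A : Set α // MeasurableSet A }))
  refine ⟨2, ?_⟩
  rintro x ⟨B, rfl⟩
  have h1 := prob_toReal_le_one P B
  have h2 := prob_toReal_le_one Q B
  have h3 : (0:ℝ) ≤ (P ↑B).toReal := ENNReal.toReal_nonneg
  have h4 : (0:ℝ) ≤ (Q ↑B).toReal := ENNReal.toReal_nonneg
  rw [abs_le]
  constructor <;> linarith

lemma integral_sub_le_tv_aux {W : Type*} [MeasurableSpace W] (P Q : Measure W)
    [IsProbabilityMeasure P] [IsProbabilityMeasure Q] (g : W → ℝ) (hg : Measurable g)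
    (c C : ℝ) (hcC : c ≤ C) (hc : ∀ w, c ≤ g w) (hC : ∀ w, g w ≤ C) :
    ∫ w, g w ∂P - ∫ w, g w ∂Q ≤ (C - c) * TV P Q := by
  set M := C - c with hM
  have hM0 : 0 ≤ M := by simp [hM]; linarith
  -- integrability of g - c
  have hint : ∀ (R : Measure W), IsProbabilityMeasure R → Integrable (fun w => g w - c) R := by
    intro R hR
    refine Integrable.mono' (integrable_const M) ((hg.sub_const c).aestronglyMeasurable) ?_
    refine Filter.Eventually.of_forall fun w => ?_
    rw [Real.norm_eq_abs, abs_of_nonneg (by linarith [hc w])]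
    linarith [hC w]
  have hgint : ∀ (R : Measure W), IsProbabilityMeasure R → Integrable g R := by
    intro R hR
    have e : g = fun w => (g w - c) + c := by funext w; ring
    rw [e]
    exact (hint R hR).add (integrable_const c)
  have key : ∀ (R : Measure W), IsProbabilityMeasure R →
      ∫ w, g w ∂ R - c = ∫ t in Set.Ioc 0 M, ((R {w | t ≤ g w - c}).toReal) := by
    intro R hR
    have h1 := (hint R hR).integral_eq_integral_Ioc_meas_le
      (Filter.Eventually.of_forall fun w => show (0:ℝ) ≤ g w - c by linarith [hc w])
      (Filter.Eventually.of_forall fun w => show g w - c ≤ M by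
        simp only [hM]; linarith [hC w])
    have h2 : ∫ w, (g w - c) ∂ R = ∫ w, g w ∂ R - c := by
      rw [integral_sub (hgint R hR) (integrable_const c)]
      simp [measure_univ]
    rw [← h2, h1]
    rfl
  -- measurability and integrability of the layer functions
  have hmeas : ∀ (R : Measure W), Measurable (fun t : ℝ => (R {w | t ≤ g w - c}).toReal) := by
    intro R
    apply Measurable.ennreal_toReal
    apply Antitone.measurable
    intro s t hst
    exact measure_mono (fun w hw => le_trans hst hw)
  have hbdd : ∀ (R : Measure W), IsProbabilityMeasure R →
      ∀ t : ℝ, (R {w | t ≤ g w - c}).toReal ≤ 1 := by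
    intro R hR t
    exact prob_toReal_le_one R _
  have hintOn : ∀ (R : Measure W), IsProbabilityMeasure R →
      IntegrableOn (fun t : ℝ => (R {w | t ≤ g w - c}).toReal) (Set.Ioc 0 M) := by
    intro R hR
    have hconst : IntegrableOn (fun _ : ℝ => (1:ℝ)) (Set.Ioc 0 M) := by
      rw [integrableOn_const_iff]
      exact Or.inr measure_Ioc_lt_top
    refine Integrable.mono' hconst ((hmeas R).aestronglyMeasurable) ?_
    refine Filter.Eventually.of_forall fun t => ?_
    rw [Real.norm_eq_abs, abs_of_nonneg ENNReal.toReal_nonneg]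
    exact hbdd R hR t
  have hPQ : ∫ w, g w ∂P - ∫ w, g w ∂Q
      = ∫ t in Set.Ioc 0 M, (((P {w | t ≤ g w - c}).toReal) - ((Q {w | t ≤ g w - c}).toReal)) := by
    rw [integral_sub (hintOn P inferInstance) (hintOn Q inferInstance)]
    have kP := key P inferInstance
    have kQ := key Q inferInstance
    linarith
  rw [hPQ]
  have hmono : ∫ t in Set.Ioc 0 M,
      (((P {w | t ≤ g w - c}).toReal) - ((Q {w | t ≤ g w - c}).toReal))
      ≤ ∫ _ in Set.Ioc 0 M, TV P Q := by
    refine setIntegral_mono_on ((hintOn P inferInstance).sub (hintOn Q inferInstance))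
      (integrableOn_const measure_Ioc_lt_top.ne) measurableSet_Ioc ?_
    intro t _
    have hAmeas : MeasurableSet {w | t ≤ g w - c} := by
      have : {w | t ≤ g w - c} = (fun w => g w - c) ⁻¹' Set.Ici t := rfl
      rw [this]
      exact (hg.sub_const c) measurableSet_Ici
    calc (P {w | t ≤ g w - c}).toReal - (Q {w | t ≤ g w - c}).toReal
        ≤ |(P {w | t ≤ g w - c}).toReal - (Q {w | t ≤ g w - c}).toReal| := le_abs_self _
      _ ≤ TV P Q := TV_le P Q hAmeas
  refine le_trans hmono ?_
  rw [setIntegral_const]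
  rw [Measure.real, Real.volume_Ioc]
  rw [smul_eq_mul, ENNReal.toReal_ofReal (by linarith)]
  simp [hM]

lemma abs_integral_sub_le_tv {W : Type*} [MeasurableSpace W] (P Q : Measure W)
    [IsProbabilityMeasure P] [IsProbabilityMeasure Q] (g : W → ℝ) (hg : Measurable g)
    (c C : ℝ) (hcC : c ≤ C) (hc : ∀ w, c ≤ g w) (hC : ∀ w, g w ≤ C) :
    |∫ w, g w ∂P - ∫ w, g w ∂Q| ≤ (C - c) * TV P Q := by
  rw [abs_le]
  constructor
  · have h := integral_sub_le_tv_aux Q P g hg c C hcC hc hC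
    rw [TV_comm] at h
    linarith
  · exact integral_sub_le_tv_aux P Q g hg c C hcC hc hC

lemma measurable_psiJS : Measurable psiJS := by
  unfold psiJS
  apply Measurable.const_mul
  apply Measurable.add
  · exact measurable_id.mul (((measurable_const.mul measurable_id).div
      (measurable_id.add measurable_const)).log)
  · exact ((measurable_const.div (measurable_id.add measurable_const))).log

lemma log_ratio_bds {ξ t : ℝ} (hξ : 0 ≤ ξ) (h1 : Real.exp (-ξ) ≤ t) (h2 : t ≤ Real.exp ξ) :
    |Real.log (2*t/(t+1))| ≤ ξ + Real.log 2 ∧ |Real.log (2/(t+1))| ≤ ξ + Real.log 2 := by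
  have ht0 : 0 < t := lt_of_lt_of_le (Real.exp_pos _) h1
  have hE1 : 1 ≤ Real.exp ξ := Real.one_le_exp hξ
  have hlog2 : 0 ≤ Real.log 2 := Real.log_nonneg one_le_two
  have hup1 : Real.log (2*t/(t+1)) ≤ Real.log 2 := by
    apply Real.log_le_log (by positivity)
    rw [div_le_iff₀ (by positivity)]
    nlinarith
  have hup2 : Real.log (2/(t+1)) ≤ Real.log 2 := by
    apply Real.log_le_log (by positivity)
    rw [div_le_iff₀ (by positivity)]
    nlinarith
  have hlow1 : -ξ ≤ Real.log (2*t/(t+1)) := by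
    have harg : Real.exp (-ξ) ≤ 2*t/(t+1) := by
      rw [le_div_iff₀ (by positivity)]
      rcases le_total t 1 with h | h
      · nlinarith [h1]
      · have : Real.exp (-ξ) ≤ 1 := by
          rw [← Real.exp_zero]; exact Real.exp_le_exp.mpr (by linarith)
        nlinarith
    calc -ξ = Real.log (Real.exp (-ξ)) := (Real.log_exp _).symm
      _ ≤ _ := Real.log_le_log (Real.exp_pos _) harg
  have hlow2 : -ξ ≤ Real.log (2/(t+1)) := by
    have harg : Real.exp (-ξ) ≤ 2/(t+1) := by
      rw [le_div_iff₀ (by positivity)]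
      have hEE : Real.exp (-ξ) * Real.exp ξ = 1 := by
        rw [← Real.exp_add]; simp
      have := Real.exp_pos (-ξ)
      nlinarith [h2, this]
    calc -ξ = Real.log (Real.exp (-ξ)) := (Real.log_exp _).symm
      _ ≤ _ := Real.log_le_log (Real.exp_pos _) harg
  constructor
  · rw [abs_le]; constructor <;> [linarith; linarith]
  · rw [abs_le]; constructor <;> [linarith; linarith]

lemma js_aux {D : Type*} [MeasurableSpace D] (μ : Measure D)
    (p fB : D → ℝ) (hp_meas : Measurable p) (hfB_meas : Measurable fB)
    (hfB_pos : ∀ d, 0 < fB d) (hfBint : Integrable fB μ)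
    (ξ : ℝ) (hξ : 0 ≤ ξ)
    (hlb : ∀ d, Real.exp (-ξ) * fB d ≤ p d) (hub : ∀ d, p d ≤ Real.exp ξ * fB d) :
    Integrable (fun d => Real.sqrt (fB d * psiJS (p d / fB d)) ^ 2) μ ∧
    JSdiv μ p fB = ∫ d, Real.sqrt (fB d * psiJS (p d / fB d)) ^ 2 ∂μ := by
  have hp_pos : ∀ d, 0 < p d := fun d =>
    lt_of_lt_of_le (mul_pos (Real.exp_pos _) (hfB_pos d)) (hlb d)
  have ht1 : ∀ d, Real.exp (-ξ) ≤ p d / fB d := fun d =>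
    (le_div_iff₀ (hfB_pos d)).mpr (hlb d)
  have ht2 : ∀ d, p d / fB d ≤ Real.exp ξ := fun d =>
    (div_le_iff₀ (hfB_pos d)).mpr (hub d)
  have hsq : ∀ d, Real.sqrt (fB d * psiJS (p d / fB d)) ^ 2 = fB d * psiJS (p d / fB d) :=
    fun d => Real.sq_sqrt (mul_nonneg (hfB_pos d).le
      (psiJS_nonneg (by have := hp_pos d; have := hfB_pos d; positivity)))
  have harg1 : ∀ d, 2*(p d/fB d)/((p d/fB d)+1) = p d / ((p d + fB d)/2) := by
    intro d
    have h1 : fB d ≠ 0 := (hfB_pos d).ne'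
    have h2 : p d + fB d ≠ 0 := by have := hp_pos d; have := hfB_pos d; positivity
    field_simp
  have harg2 : ∀ d, 2/((p d/fB d)+1) = fB d / ((p d + fB d)/2) := by
    intro d
    have h1 : fB d ≠ 0 := (hfB_pos d).ne'
    have h2 : p d + fB d ≠ 0 := by have := hp_pos d; have := hfB_pos d; positivity
    field_simp
  have hexp : ∀ d, fB d * psiJS (p d / fB d)
      = (1/2) * (p d * Real.log (p d / ((p d + fB d)/2))
        + fB d * Real.log (fB d / ((p d + fB d)/2))) := by
    intro d
    rw [psiJS, harg1 d, harg2 d]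
    have h1 : fB d ≠ 0 := (hfB_pos d).ne'
    field_simp
  have hlog2 : (0:ℝ) ≤ Real.log 2 := Real.log_nonneg one_le_two
  set K : ℝ := Real.exp ξ * (ξ + Real.log 2) with hK
  have hI1meas : Measurable (fun d => p d * Real.log (p d / ((p d + fB d)/2))) :=
    hp_meas.mul ((hp_meas.div ((hp_meas.add hfB_meas).div_const 2)).log)
  have hI2meas : Measurable (fun d => fB d * Real.log (fB d / ((p d + fB d)/2))) :=
    hfB_meas.mul ((hfB_meas.div ((hp_meas.add hfB_meas).div_const 2)).log)
  have hI1int : Integrable (fun d => p d * Real.log (p d / ((p d + fB d)/2))) μ := by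
    refine Integrable.mono' (hfBint.const_mul K) hI1meas.aestronglyMeasurable ?_
    refine Filter.Eventually.of_forall fun d => ?_
    rw [Real.norm_eq_abs, abs_mul, abs_of_pos (hp_pos d)]
    have habs := (log_ratio_bds hξ (ht1 d) (ht2 d)).1
    rw [harg1 d] at habs
    have := mul_le_mul (hub d) habs (abs_nonneg _) (mul_pos (Real.exp_pos ξ) (hfB_pos d)).le
    calc p d * |Real.log (p d / ((p d + fB d)/2))|
        ≤ Real.exp ξ * fB d * (ξ + Real.log 2) := this
      _ = K * fB d := by rw [hK]; ring
  have hI2int : Integrable (fun d => fB d * Real.log (fB d / ((p d + fB d)/2))) μ := by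
    refine Integrable.mono' (hfBint.const_mul (ξ + Real.log 2)) hI2meas.aestronglyMeasurable ?_
    refine Filter.Eventually.of_forall fun d => ?_
    rw [Real.norm_eq_abs, abs_mul, abs_of_pos (hfB_pos d)]
    have habs := (log_ratio_bds hξ (ht1 d) (ht2 d)).2
    rw [harg2 d] at habs
    have := mul_le_mul_of_nonneg_left habs (hfB_pos d).le
    linarith [this]
  have hu2eq : (fun d => Real.sqrt (fB d * psiJS (p d / fB d)) ^ 2)
      = fun d => (1/2) * (p d * Real.log (p d / ((p d + fB d)/2))
        + fB d * Real.log (fB d / ((p d + fB d)/2))) :=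
    funext fun d => by rw [hsq d, hexp d]
  have hsumint : Integrable (fun d => p d * Real.log (p d / ((p d + fB d)/2))
      + fB d * Real.log (fB d / ((p d + fB d)/2))) μ := hI1int.add hI2int
  constructor
  · rw [hu2eq]
    exact hsumint.const_mul (1/2)
  · simp only [JSdiv]
    rw [hu2eq, integral_const_mul, integral_add hI1int hI2int]
    ring

/-- `√JS(f^O ‖ f_B) ≤ √JS(f^A ‖ f_B) + (1/2)·(e^{2ξ} − 1)·TV(P^O ‖ P^S)`. -/
theorem sqrt_js_original_le_privacy_leakage_add_tv
    {D W : Type*} [MeasurableSpace D] [MeasurableSpace W]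
    (μ : Measure D) [SigmaFinite μ]
    (f : D → W → ℝ)
    (hf_meas : Measurable fun p : D × W => f p.1 p.2)
    (hf_pos : ∀ d w, 0 < f d w)
    (hf_dens : ∀ w, ∫ d, f d w ∂μ = 1)
    (fB : D → ℝ)
    (hfB_meas : Measurable fB)
    (hfB_pos : ∀ d, 0 < fB d)
    (hfB_dens : ∫ d, fB d ∂μ = 1)
    (PO PS : Measure W) [IsProbabilityMeasure PO] [IsProbabilityMeasure PS]
    (ξ : ℝ) (hξ : 0 ≤ ξ)
    (hBP : ∀ d w, |Real.log (f d w / fB d)| ≤ ξ) :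
    Real.sqrt (JSdiv μ (fun d => ∫ w, f d w ∂PO) fB)
      ≤ Real.sqrt (JSdiv μ (fun d => ∫ w, f d w ∂PS) fB)
        + (1 / 2) * (Real.exp (2 * ξ) - 1) * TV PO PS := by
  set E := Real.exp ξ with hEdef
  have hE1 : 1 ≤ E := Real.one_le_exp hξ
  have hEpos : 0 < E := Real.exp_pos ξ
  have hee1 : Real.exp (-ξ) ≤ 1 := by
    rw [← Real.exp_zero]; exact Real.exp_le_exp.mpr (by linarith)
  have hEE : E * Real.exp (-ξ) = 1 := by rw [hEdef, ← Real.exp_add]; simp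
  have hTV0 : 0 ≤ TV PO PS := TV_nonneg PO PS
  have hfBint : Integrable fB μ := by
    by_contra h
    rw [integral_undef h] at hfB_dens
    norm_num at hfB_dens
  have hfb : ∀ d w, Real.exp (-ξ) * fB d ≤ f d w ∧ f d w ≤ E * fB d := by
    intro d w
    have h := abs_le.mp (hBP d w)
    have hratio : 0 < f d w / fB d := div_pos (hf_pos d w) (hfB_pos d)
    have hup : f d w / fB d ≤ E := by
      rw [← Real.exp_log hratio]
      exact Real.exp_le_exp.mpr h.2
    have hlo : Real.exp (-ξ) ≤ f d w / fB d := by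
      rw [← Real.exp_log hratio]
      exact Real.exp_le_exp.mpr h.1
    exact ⟨(le_div_iff₀ (hfB_pos d)).mp hlo, (div_le_iff₀ (hfB_pos d)).mp hup⟩
  have hfd_meas : ∀ d, Measurable (fun w => f d w) := fun d =>
    hf_meas.comp measurable_prodMk_left
  have hfd_int : ∀ d (R : Measure W), IsProbabilityMeasure R →
      Integrable (fun w => f d w) R := by
    intro d R hR
    refine Integrable.mono' (integrable_const (E * fB d))
      (hfd_meas d).aestronglyMeasurable ?_
    refine Filter.Eventually.of_forall fun w => ?_
    rw [Real.norm_eq_abs, abs_of_pos (hf_pos d w)]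
    exact (hfb d w).2
  have hmix_bounds : ∀ d (R : Measure W) (hR : IsProbabilityMeasure R),
      Real.exp (-ξ) * fB d ≤ ∫ w, f d w ∂ R ∧ (∫ w, f d w ∂ R) ≤ E * fB d := by
    intro d R hR
    constructor
    · have := integral_mono (integrable_const (Real.exp (-ξ) * fB d)) (hfd_int d R hR)
        (fun w => (hfb d w).1)
      simpa [measure_univ] using this
    · have := integral_mono (hfd_int d R hR) (integrable_const (E * fB d))
        (fun w => (hfb d w).2)
      simpa [measure_univ] using this
  have hmix_meas : ∀ (R : Measure W) (hR : IsProbabilityMeasure R),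
      Measurable (fun d => ∫ w, f d w ∂ R) := by
    intro R hR
    exact (hf_meas.stronglyMeasurable.integral_prod_right').measurable
  set p := fun d => ∫ w, f d w ∂PO with hpdef
  set q := fun d => ∫ w, f d w ∂PS with hqdef
  have hp_meas : Measurable p := hmix_meas PO inferInstance
  have hq_meas : Measurable q := hmix_meas PS inferInstance
  have hp_lb : ∀ d, Real.exp (-ξ) * fB d ≤ p d := fun d => (hmix_bounds d PO inferInstance).1
  have hp_ub : ∀ d, p d ≤ E * fB d := fun d => (hmix_bounds d PO inferInstance).2
  have hq_lb : ∀ d, Real.exp (-ξ) * fB d ≤ q d := fun d => (hmix_bounds d PS inferInstance).1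
  have hq_ub : ∀ d, q d ≤ E * fB d := fun d => (hmix_bounds d PS inferInstance).2
  have hpq : ∀ d, |p d - q d| ≤ (E - Real.exp (-ξ)) * fB d * TV PO PS := by
    intro d
    have h := abs_integral_sub_le_tv PO PS (fun w => f d w) (hfd_meas d)
      (Real.exp (-ξ) * fB d) (E * fB d)
      (by nlinarith [hfB_pos d, Real.exp_pos (-ξ), hee1])
      (fun w => (hfb d w).1) (fun w => (hfb d w).2)
    calc |p d - q d| ≤ (E * fB d - Real.exp (-ξ) * fB d) * TV PO PS := h
      _ = (E - Real.exp (-ξ)) * fB d * TV PO PS := by ring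
  set u := fun d => Real.sqrt (fB d * psiJS (p d / fB d)) with hudef
  set v := fun d => Real.sqrt (fB d * psiJS (q d / fB d)) with hvdef
  set wf := fun d => (E / 2) * (|p d - q d| / Real.sqrt (fB d)) with hwdef
  have hJSp := js_aux μ p fB hp_meas hfB_meas hfB_pos hfBint ξ hξ hp_lb hp_ub
  have hJSq := js_aux μ q fB hq_meas hfB_meas hfB_pos hfBint ξ hξ hq_lb hq_ub
  have hu0 : ∀ d, 0 ≤ u d := fun d => Real.sqrt_nonneg _
  have hv0 : ∀ d, 0 ≤ v d := fun d => Real.sqrt_nonneg _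
  have hw0 : ∀ d, 0 ≤ wf d := by
    intro d
    have h1 := abs_nonneg (p d - q d)
    have h2 := Real.sqrt_nonneg (fB d)
    rw [hwdef]
    positivity
  have hv_meas : Measurable v :=
    Real.continuous_sqrt.measurable.comp
      (hfB_meas.mul (measurable_psiJS.comp (hq_meas.div hfB_meas)))
  have hw_meas : Measurable wf :=
    ((((hp_meas.sub hq_meas).abs).div
      (Real.continuous_sqrt.measurable.comp hfB_meas)).const_mul (E / 2))
  set K : ℝ := ((E/2) * ((E - Real.exp (-ξ)) * TV PO PS))^2 with hKdef
  have hwsq : ∀ d, wf d ^ 2 = (E/2)^2 * ((p d - q d)^2 / fB d) := by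
    intro d
    have hs : Real.sqrt (fB d) ^ 2 = fB d := Real.sq_sqrt (hfB_pos d).le
    have he : (E / 2 * (|p d - q d| / Real.sqrt (fB d)))^2
        = (E/2)^2 * ((p d - q d)^2 / (Real.sqrt (fB d))^2) := by
      rw [mul_pow, div_pow, div_pow, sq_abs]
    rw [hwdef, he, hs]
  have hwbd : ∀ d, wf d ^ 2 ≤ K * fB d := by
    intro d
    rw [hwsq d, hKdef]
    have h1 : (p d - q d)^2 ≤ ((E - Real.exp (-ξ)) * fB d * TV PO PS)^2 := by
      rw [← sq_abs (p d - q d)]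
      exact pow_le_pow_left₀ (abs_nonneg _) (hpq d) 2
    have h2 : (p d - q d)^2 / fB d ≤ ((E - Real.exp (-ξ)) * TV PO PS)^2 * fB d := by
      rw [div_le_iff₀ (hfB_pos d)]
      nlinarith [h1]
    calc (E/2)^2 * ((p d - q d)^2 / fB d)
        ≤ (E/2)^2 * (((E - Real.exp (-ξ)) * TV PO PS)^2 * fB d) :=
          mul_le_mul_of_nonneg_left h2 (sq_nonneg _)
      _ = ((E/2) * ((E - Real.exp (-ξ)) * TV PO PS))^2 * fB d := by ring
  have hw2int : Integrable (fun d => wf d ^ 2) μ := by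
    refine Integrable.mono' (hfBint.const_mul K) ((hw_meas.pow_const 2).aestronglyMeasurable) ?_
    refine Filter.Eventually.of_forall fun d => ?_
    rw [Real.norm_eq_abs, abs_of_nonneg (sq_nonneg _)]
    exact hwbd d
  have hintw : ∫ d, wf d ^ 2 ∂μ ≤ K := by
    have h := integral_mono hw2int (hfBint.const_mul K) hwbd
    rwa [integral_const_mul, hfB_dens, mul_one] at h
  -- pointwise Minkowski bound
  have hle : ∀ d, u d ≤ v d + wf d := by
    intro d
    have hfB0 := hfB_pos d
    have hsf : 0 < Real.sqrt (fB d) := Real.sqrt_pos.mpr hfB0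
    have hss : Real.sqrt (fB d) * Real.sqrt (fB d) = fB d := Real.mul_self_sqrt hfB0.le
    have htp1 : Real.exp (-ξ) ≤ p d / fB d := (le_div_iff₀ hfB0).mpr (hp_lb d)
    have htp2 : p d / fB d ≤ E := (div_le_iff₀ hfB0).mpr (hp_ub d)
    have htq1 : Real.exp (-ξ) ≤ q d / fB d := (le_div_iff₀ hfB0).mpr (hq_lb d)
    have htq2 : q d / fB d ≤ E := (div_le_iff₀ hfB0).mpr (hq_ub d)
    have hlip := sqrt_psiJS_lip hξ htp1 htp2 htq1 htq2
    have htr : |p d / fB d - q d / fB d| = |p d - q d| / fB d := by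
      rw [div_sub_div_same, abs_div, abs_of_pos hfB0]
    rw [htr] at hlip
    have hudec : u d = Real.sqrt (fB d) * Real.sqrt (psiJS (p d / fB d)) := by
      rw [hudef]; exact Real.sqrt_mul hfB0.le _
    have hvdec : v d = Real.sqrt (fB d) * Real.sqrt (psiJS (q d / fB d)) := by
      rw [hvdef]; exact Real.sqrt_mul hfB0.le _
    have habs : Real.sqrt (psiJS (p d / fB d)) - Real.sqrt (psiJS (q d / fB d))
        ≤ (E / 2) * (|p d - q d| / fB d) := le_trans (le_abs_self _) hlip
    have hkey : u d - v d ≤ Real.sqrt (fB d) * ((E / 2) * (|p d - q d| / fB d)) := by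
      rw [hudec, hvdec, ← mul_sub]
      exact mul_le_mul_of_nonneg_left habs hsf.le
    have heq : Real.sqrt (fB d) * ((E / 2) * (|p d - q d| / fB d)) = wf d := by
      rw [hwdef]
      field_simp
      linear_combination |p d - q d| * hss
    rw [heq] at hkey
    linarith
  have hvw_meas : AEStronglyMeasurable (fun d => v d * wf d) μ :=
    (hv_meas.mul hw_meas).aestronglyMeasurable
  have hmink := my_minkowski μ u v wf hu0 hv0 hw0 hvw_meas hJSp.1 hJSq.1 hw2int hle
  have hsw : Real.sqrt (∫ d, wf d ^ 2 ∂μ) ≤ 1/2 * (Real.exp (2*ξ) - 1) * TV PO PS := by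
    have hKnn : 0 ≤ (E/2) * ((E - Real.exp (-ξ)) * TV PO PS) := by
      apply mul_nonneg (by positivity)
      exact mul_nonneg (by linarith) hTV0
    have h1 : Real.sqrt (∫ d, wf d ^ 2 ∂μ) ≤ Real.sqrt K := Real.sqrt_le_sqrt hintw
    have h2 : Real.sqrt K = (E/2) * ((E - Real.exp (-ξ)) * TV PO PS) := by
      rw [hKdef]; exact Real.sqrt_sq hKnn
    have h3 : (E/2) * ((E - Real.exp (-ξ)) * TV PO PS)
        = 1/2 * (Real.exp (2*ξ) - 1) * TV PO PS := by
      have he2 : Real.exp (2*ξ) = E * E := by rw [two_mul, Real.exp_add]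
      rw [he2]
      linear_combination (-(TV PO PS)/2) * hEE
    linarith
  calc Real.sqrt (JSdiv μ p fB)
      = Real.sqrt (∫ d, u d ^ 2 ∂μ) := by rw [hJSp.2]
    _ ≤ Real.sqrt (∫ d, v d ^ 2 ∂μ) + Real.sqrt (∫ d, wf d ^ 2 ∂μ) := hmink
    _ ≤ Real.sqrt (JSdiv μ q fB) + 1/2 * (Real.exp (2*ξ) - 1) * TV PO PS := by
        rw [hJSq.2]
        linarith
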